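/- arXiv:1208.1033 — 11 statements merged into one kernel-verified Lean document; each statement's English description precedes it below -/
import Mathlib

section
/- Let h : (0,1) → (0,∞) be a given function, φ : I → I a map on an interval I ⊆ ℝ, g : I → [0,∞) a φ_h-convex function, and f : I → [0,∞) a function. Then f is (g,φ_h)-convex dominated on I if and only if both g − f and g + f are φ_h-convex on I. -/
open MeasureTheory Set

/-- `F` is `φ_h`-convex on `I`. -/
def PhiHConvexOn (I : Set ℝ) (h φ F : ℝ → ℝ) : Prop :=
  ∀ x ∈ I, ∀ y ∈ I, ∀ t ∈ Set.Ioo (0:ℝ) 1,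
    F (t * φ x + (1 - t) * φ y) ≤ h t * F (φ x) + h (1 - t) * F (φ y)

/-- `f` is `(g, φ_h)`-convex dominated on `I`. -/
def GPhiHConvexDominated (I : Set ℝ) (h φ g f : ℝ → ℝ) : Prop :=
  ∀ x ∈ I, ∀ y ∈ I, ∀ t ∈ Set.Ioo (0:ℝ) 1,
    |h t * f (φ x) + h (1 - t) * f (φ y) - f (t * φ x + (1 - t) * φ y)| ≤
      h t * g (φ x) + h (1 - t) * g (φ y) - g (t * φ x + (1 - t) * φ y)

theorem stmt0 (I : Set ℝ) (hI : Convex ℝ I) (h φ f g : ℝ → ℝ)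
    (hh : ∀ t ∈ Set.Ioo (0:ℝ) 1, 0 < h t)
    (hφ : Set.MapsTo φ I I)
    (hf0 : ∀ x ∈ I, 0 ≤ f x) (hg0 : ∀ x ∈ I, 0 ≤ g x)
    (hg : PhiHConvexOn I h φ g) :
    GPhiHConvexDominated I h φ g f ↔
      PhiHConvexOn I h φ (g - f) ∧ PhiHConvexOn I h φ (g + f) := by
  constructor
  · intro H
    constructor <;> intro x hx y hy t ht <;>
      have := H x hx y hy t ht <;> rw [abs_le] at this <;>
      simp only [Pi.sub_apply, Pi.add_apply] <;> linarith [this.1, this.2]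
  · rintro ⟨H1, H2⟩ x hx y hy t ht
    have h1 := H1 x hx y hy t ht
    have h2 := H2 x hx y hy t ht
    simp only [Pi.sub_apply, Pi.add_apply] at h1 h2
    rw [abs_le]
    constructor <;> linarith
end

section
/- Let a < b, let h : (0,1) → (0,∞) be a given function, let φ : [a,b] → [a,b] be an affine continuous map (φ(λx + (1−λ)y) = λφ(x) + (1−λ)φ(y)) with φ(a) < φ(b), let g : [a,b] → [0,∞) be φ_h-convex and Lebesgue integrable, and let f : [a,b] → [0,∞) be Lebesgue integrable and (g,φ_h)-convex dominated on [a,b]. Then |(1/(φ(b) − φ(a))) ∫_{φ(a)}^{φ(b)} f(x) dx − (1/(2h(1/2))) f((φ(a) + φ(b))/2)| ≤ (1/(φ(b) − φ(a))) ∫_{φ(a)}^{φ(b)} g(x) dx − (1/(2h(1/2))) g((φ(a) + φ(b))/2). -/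
/-!
Every point `x` of `[φ a, φ b]` is `φ y` for some `y ∈ [a, b]`, and by affinity the reflected
point `φ a + φ b - x` is then `φ (a + b - y)`. Applying the domination at `t = 1/2` to `y` and
`a + b - y` bounds `h(1/2) (f x + f (φ a + φ b - x)) - f (midpoint)` by the same expression in `g`.
Integrating over `[φ a, φ b]`, the reflection does not change the integral, so the left side
integrates to `2 h(1/2) ∫ f - (φ b - φ a) f (midpoint)`, and likewise for `g`.
-/

open MeasureTheory Set

lemma IntervalIntegrable.comp_add_sub {f : ℝ → ℝ} {c d : ℝ}
    (hf : IntervalIntegrable f volume c d) :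
    IntervalIntegrable (fun x => f (c + d - x)) volume c d := by
  simpa using (hf.comp_sub_left (c + d)).symm

lemma integral_comp_add_sub_eq (f : ℝ → ℝ) (c d : ℝ) :
    ∫ x in c..d, f (c + d - x) = ∫ x in c..d, f x := by
  simp [intervalIntegral.integral_comp_sub_left]

lemma integral_add_comp_add_sub_sub_eq {f : ℝ → ℝ} {c d k : ℝ}
    (hf : IntervalIntegrable f volume c d) (hk : k ≠ 0) (u : ℝ) :
    ∫ x in c..d, (k * f x + k * f (c + d - x) - u) =
      2 * k * ∫ x in c..d, (f x - 1 / (2 * k) * u) := by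
  rw [intervalIntegral.integral_sub ((hf.const_mul k).add (hf.comp_add_sub.const_mul k))
      intervalIntegrable_const,
    intervalIntegral.integral_add (hf.const_mul k) (hf.comp_add_sub.const_mul k),
    intervalIntegral.integral_sub hf intervalIntegrable_const, intervalIntegral.integral_const_mul,
    intervalIntegral.integral_const_mul, integral_comp_add_sub_eq f c d,
    intervalIntegral.integral_const, intervalIntegral.integral_const, smul_eq_mul, smul_eq_mul]
  field_simp
  ring

lemma abs_average_sub_le_of_abs_add_comp_add_sub_le {f g : ℝ → ℝ} {c d k u v : ℝ}
    (hcd : c ≤ d) (hk : 0 < k)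
    (hf : IntervalIntegrable f volume c d) (hg : IntervalIntegrable g volume c d)
    (hbound : ∀ x ∈ Ioo c d,
      |k * f x + k * f (c + d - x) - u| ≤ k * g x + k * g (c + d - x) - v) :
    |1 / (d - c) * ∫ x in c..d, f x - 1 / (2 * k) * u| ≤
      1 / (d - c) * ∫ x in c..d, g x - 1 / (2 * k) * v := by
  have hk2 : 0 < 2 * k := by positivity
  have hint : 2 * k * |∫ x in c..d, f x - 1 / (2 * k) * u| ≤
      2 * k * ∫ x in c..d, g x - 1 / (2 * k) * v :=
    calc 2 * k * |∫ x in c..d, f x - 1 / (2 * k) * u|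
        = |∫ x in c..d, (k * f x + k * f (c + d - x) - u)| := by
          rw [integral_add_comp_add_sub_sub_eq hf hk.ne', abs_mul, abs_of_pos hk2]
      _ ≤ ∫ x in c..d, |k * f x + k * f (c + d - x) - u| :=
          intervalIntegral.abs_integral_le_integral_abs hcd
      _ ≤ ∫ x in c..d, (k * g x + k * g (c + d - x) - v) :=
          intervalIntegral.integral_mono_on_of_le_Ioo hcd
            (((hf.const_mul k).add (hf.comp_add_sub.const_mul k)).sub
              intervalIntegrable_const).abs
            (((hg.const_mul k).add (hg.comp_add_sub.const_mul k)).sub intervalIntegrable_const)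
            hbound
      _ = 2 * k * ∫ x in c..d, g x - 1 / (2 * k) * v :=
          integral_add_comp_add_sub_sub_eq hg hk.ne' v
  have hcd' : 0 ≤ 1 / (d - c) := by simpa using hcd
  rw [abs_mul, abs_of_nonneg hcd']
  exact mul_le_mul_of_nonneg_left (le_of_mul_le_mul_left hint hk2) hcd'

lemma exists_mem_Icc_apply_eq_of_affine {a b : ℝ} {φ : ℝ → ℝ} (hab : a ≤ b)
    (hφaff : ∀ x ∈ Icc a b, ∀ y ∈ Icc a b, ∀ l ∈ Icc (0:ℝ) 1,
      φ (l * x + (1 - l) * y) = l * φ x + (1 - l) * φ y)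
    {x : ℝ} (hx : x ∈ Icc (φ a) (φ b)) :
    ∃ y ∈ Icc a b, φ y = x ∧ φ (a + b - y) = φ a + φ b - x := by
  have ha : a ∈ Icc a b := left_mem_Icc.2 hab
  have hb : b ∈ Icc a b := right_mem_Icc.2 hab
  rcases hx.1.eq_or_lt with rfl | hax
  · exact ⟨a, ha, rfl, by simp⟩
  set t := (φ b - x) / (φ b - φ a)
  have hpos : 0 < φ b - φ a := by linarith [hx.2]
  have ht : t ∈ Icc (0:ℝ) 1 :=
    ⟨div_nonneg (by linarith [hx.2]) hpos.le, (div_le_one hpos).2 (by linarith)⟩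
  have ht' : 1 - t ∈ Icc (0:ℝ) 1 := ⟨by linarith [ht.2], by linarith [ht.1]⟩
  have hφt : t * φ a + (1 - t) * φ b = x := by
    simp only [t]; field_simp; ring
  refine ⟨t * a + (1 - t) * b, ⟨by nlinarith [ht.1, ht.2], by nlinarith [ht.1, ht.2]⟩,
    by rw [hφaff a ha b hb t ht, hφt], ?_⟩
  have hrefl : a + b - (t * a + (1 - t) * b) = (1 - t) * a + (1 - (1 - t)) * b := by ring
  rw [hrefl, hφaff a ha b hb (1 - t) ht', ← hφt]
  ring

lemma GPhiHConvexDominated.abs_add_comp_add_sub_le {a b : ℝ} {h φ f g : ℝ → ℝ} (hab : a ≤ b)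
    (hφaff : ∀ x ∈ Icc a b, ∀ y ∈ Icc a b, ∀ l ∈ Icc (0:ℝ) 1,
      φ (l * x + (1 - l) * y) = l * φ x + (1 - l) * φ y)
    (hfdom : GPhiHConvexDominated (Icc a b) h φ g f) {x : ℝ} (hx : x ∈ Icc (φ a) (φ b)) :
    |h (1 / 2) * f x + h (1 / 2) * f (φ a + φ b - x) - f ((φ a + φ b) / 2)| ≤
      h (1 / 2) * g x + h (1 / 2) * g (φ a + φ b - x) - g ((φ a + φ b) / 2) := by
  obtain ⟨y, hy, hφy, hφy'⟩ := exists_mem_Icc_apply_eq_of_affine hab hφaff hx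
  have hy' : a + b - y ∈ Icc a b := ⟨by linarith [hy.2], by linarith [hy.1]⟩
  have hmid : 1 / 2 * x + (1 - 1 / 2) * (φ a + φ b - x) = (φ a + φ b) / 2 := by ring
  have := hfdom y hy (a + b - y) hy' (1 / 2) ⟨by norm_num, by norm_num⟩
  rwa [hφy, hφy', hmid, show (1:ℝ) - 1 / 2 = 1 / 2 by norm_num] at this

theorem stmt2_general (a b : ℝ) (hab : a < b) (h φ f g : ℝ → ℝ)
    (hh : ∀ t ∈ Set.Ioo (0:ℝ) 1, 0 < h t)
    (hφmaps : Set.MapsTo φ (Set.Icc a b) (Set.Icc a b))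
    (hφaff : ∀ x ∈ Set.Icc a b, ∀ y ∈ Set.Icc a b, ∀ l ∈ Set.Icc (0:ℝ) 1,
      φ (l * x + (1 - l) * y) = l * φ x + (1 - l) * φ y)
    (hφab : φ a < φ b)
    (hgint : IntegrableOn g (Set.Icc a b))
    (hfint : IntegrableOn f (Set.Icc a b))
    (hfdom : GPhiHConvexDominated (Set.Icc a b) h φ g f) :
    |(1 / (φ b - φ a)) * ∫ x in φ a..φ b, f x -
        (1 / (2 * h (1 / 2))) * f ((φ a + φ b) / 2)| ≤
      (1 / (φ b - φ a)) * ∫ x in φ a..φ b, g x -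
        (1 / (2 * h (1 / 2))) * g ((φ a + φ b) / 2) := by
  have hsub : Icc (φ a) (φ b) ⊆ Icc a b :=
    Icc_subset_Icc (hφmaps (left_mem_Icc.2 hab.le)).1 (hφmaps (right_mem_Icc.2 hab.le)).2
  have hfi : IntervalIntegrable f volume (φ a) (φ b) :=
    (intervalIntegrable_iff_integrableOn_Icc_of_le hφab.le).2 (hfint.mono_set hsub)
  have hgi : IntervalIntegrable g volume (φ a) (φ b) :=
    (intervalIntegrable_iff_integrableOn_Icc_of_le hφab.le).2 (hgint.mono_set hsub)
  exact abs_average_sub_le_of_abs_add_comp_add_sub_le hφab.le (hh _ ⟨by norm_num, by norm_num⟩)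
    hfi hgi fun x hx => hfdom.abs_add_comp_add_sub_le hab.le hφaff (Ioo_subset_Icc_self hx)

theorem stmt2 (a b : ℝ) (hab : a < b) (h φ f g : ℝ → ℝ)
    (hh : ∀ t ∈ Set.Ioo (0:ℝ) 1, 0 < h t)
    (hφmaps : Set.MapsTo φ (Set.Icc a b) (Set.Icc a b))
    (hφaff : ∀ x ∈ Set.Icc a b, ∀ y ∈ Set.Icc a b, ∀ l ∈ Set.Icc (0:ℝ) 1,
      φ (l * x + (1 - l) * y) = l * φ x + (1 - l) * φ y)
    (hφcont : ContinuousOn φ (Set.Icc a b))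
    (hφab : φ a < φ b)
    (hg0 : ∀ x ∈ Set.Icc a b, 0 ≤ g x)
    (hgconv : PhiHConvexOn (Set.Icc a b) h φ g)
    (hgint : IntegrableOn g (Set.Icc a b))
    (hf0 : ∀ x ∈ Set.Icc a b, 0 ≤ f x)
    (hfint : IntegrableOn f (Set.Icc a b))
    (hfdom : GPhiHConvexDominated (Set.Icc a b) h φ g f) :
    |(1 / (φ b - φ a)) * ∫ x in φ a..φ b, f x -
        (1 / (2 * h (1 / 2))) * f ((φ a + φ b) / 2)| ≤
      (1 / (φ b - φ a)) * ∫ x in φ a..φ b, g x -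
        (1 / (2 * h (1 / 2))) * g ((φ a + φ b) / 2) :=
  stmt2_general a b hab h φ f g hh hφmaps hφaff hφab hgint hfint hfdom
end

section
/- Let a < b, let h : (0,1) → (0,∞) be a given function that is Lebesgue integrable on (0,1), let φ : [a,b] → [a,b] be an affine continuous map (φ(λx + (1−λ)y) = λφ(x) + (1−λ)φ(y)) with φ(a) < φ(b), let g : [a,b] → [0,∞) be φ_h-convex and Lebesgue integrable, and let f : [a,b] → [0,∞) be Lebesgue integrable and (g,φ_h)-convex dominated on [a,b]. Then |[f(φ(a)) + f(φ(b))] ∫_0^1 h(t) dt − (1/(φ(b) − φ(a))) ∫_{φ(a)}^{φ(b)} f(x) dx| ≤ [g(φ(a)) + g(φ(b))] ∫_0^1 h(t) dt − (1/(φ(b) − φ(a))) ∫_{φ(a)}^{φ(b)} g(x) dx. -/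
open MeasureTheory Set

/-!
Parametrize the segment from `φ b` to `φ a` by `t ↦ t φ(a) + (1 - t) φ(b)`, `t ∈ [0,1]`. After this
change of variables, each side of the inequality is the integral over `[0,1]` of the `h`-convexity
defect `h(t) F(φ a) + h(1-t) F(φ b) - F(t φ(a) + (1-t) φ(b))` of `F = f`, resp. `F = g`, using
`∫₀¹ h(1-t) dt = ∫₀¹ h(t) dt`. Domination bounds the first defect in absolute value by the second
pointwise, and integrating that bound gives the theorem.
-/

def hConvexityDefect (h F : ℝ → ℝ) (A B t : ℝ) : ℝ :=
  h t * F A + h (1 - t) * F B - F (t * A + (1 - t) * B)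

lemma integral_comp_segment (F : ℝ → ℝ) {A B : ℝ} (hAB : A ≠ B) :
    ∫ t in (0:ℝ)..1, F (t * A + (1 - t) * B) = 1 / (B - A) * ∫ x in A..B, F x := by
  have hAB' : A - B ≠ 0 := sub_ne_zero.2 hAB
  have hlin : ∀ t : ℝ, t * A + (1 - t) * B = (A - B) * t + B := fun t ↦ by ring
  simp_rw [hlin, intervalIntegral.integral_comp_mul_add F hAB' B, smul_eq_mul, mul_zero, zero_add,
    mul_one, sub_add_cancel, intervalIntegral.integral_symm A B, one_div, mul_neg, ← neg_mul,
    neg_inv, neg_sub]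

lemma IntervalIntegrable.comp_segment {F : ℝ → ℝ} {A B : ℝ} (hF : IntervalIntegrable F volume A B)
    (hAB : A ≠ B) : IntervalIntegrable (fun t ↦ F (t * A + (1 - t) * B)) volume 0 1 := by
  have hAB' : A - B ≠ 0 := sub_ne_zero.2 hAB
  have hlin : ∀ t : ℝ, t * A + (1 - t) * B = (A - B) * t + B := fun t ↦ by ring
  simp_rw [hlin]
  simpa [hAB', div_self hAB'] using ((hF.comp_add_right B).comp_mul_left (c := A - B)).symm

lemma integral_comp_one_sub_zero_one (h : ℝ → ℝ) :
    ∫ t in (0:ℝ)..1, h (1 - t) = ∫ t in (0:ℝ)..1, h t := by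
  rw [intervalIntegral.integral_comp_sub_left h 1, sub_self, sub_zero]

lemma IntervalIntegrable.comp_one_sub_zero_one {h : ℝ → ℝ} (hh : IntervalIntegrable h volume 0 1) :
    IntervalIntegrable (fun t ↦ h (1 - t)) volume 0 1 := by
  simpa using (hh.comp_sub_left 1).symm

section hConvexityDefect

variable {h F : ℝ → ℝ} {A B : ℝ}

lemma intervalIntegrable_hConvexityDefect (hh : IntervalIntegrable h volume 0 1)
    (hF : IntervalIntegrable F volume A B) (hAB : A ≠ B) :
    IntervalIntegrable (hConvexityDefect h F A B) volume 0 1 :=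
  ((hh.mul_const _).add (hh.comp_one_sub_zero_one.mul_const _)).sub (hF.comp_segment hAB)

lemma integral_hConvexityDefect (hh : IntervalIntegrable h volume 0 1)
    (hF : IntervalIntegrable F volume A B) (hAB : A ≠ B) :
    ∫ t in (0:ℝ)..1, hConvexityDefect h F A B t =
      (F A + F B) * (∫ t in (0:ℝ)..1, h t) - 1 / (B - A) * ∫ x in A..B, F x := by
  have hh' := hh.comp_one_sub_zero_one
  unfold hConvexityDefect
  rw [intervalIntegral.integral_sub ((hh.mul_const _).add (hh'.mul_const _)) (hF.comp_segment hAB),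
    intervalIntegral.integral_add (hh.mul_const _) (hh'.mul_const _),
    intervalIntegral.integral_mul_const, intervalIntegral.integral_mul_const,
    integral_comp_one_sub_zero_one, integral_comp_segment F hAB]
  ring

end hConvexityDefect

theorem stmt3_general (a b : ℝ) (hab : a < b) (h φ f g : ℝ → ℝ)
    (hhint : IntervalIntegrable h MeasureTheory.volume 0 1)
    (hφmaps : Set.MapsTo φ (Set.Icc a b) (Set.Icc a b))
    (hφab : φ a < φ b)
    (hgint : IntegrableOn g (Set.Icc a b))
    (hfint : IntegrableOn f (Set.Icc a b))
    (hfdom : GPhiHConvexDominated (Set.Icc a b) h φ g f) :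
    |(f (φ a) + f (φ b)) * (∫ t in (0:ℝ)..1, h t) -
        (1 / (φ b - φ a)) * ∫ x in φ a..φ b, f x| ≤
      (g (φ a) + g (φ b)) * (∫ t in (0:ℝ)..1, h t) -
        (1 / (φ b - φ a)) * ∫ x in φ a..φ b, g x := by
  have ha : a ∈ Icc a b := left_mem_Icc.2 hab.le
  have hb : b ∈ Icc a b := right_mem_Icc.2 hab.le
  have hsub : Icc (φ a) (φ b) ⊆ Icc a b := Icc_subset_Icc (hφmaps ha).1 (hφmaps hb).2
  have hintervalIntegrable {F : ℝ → ℝ} (hF : IntegrableOn F (Icc a b)) :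
      IntervalIntegrable F volume (φ a) (φ b) :=
    (intervalIntegrable_iff_integrableOn_Icc_of_le hφab.le).2 (hF.mono_set hsub)
  rw [← integral_hConvexityDefect hhint (hintervalIntegrable hfint) hφab.ne,
    ← integral_hConvexityDefect hhint (hintervalIntegrable hgint) hφab.ne, ← Real.norm_eq_abs]
  refine intervalIntegral.norm_integral_le_of_norm_le zero_le_one ?_
    (intervalIntegrable_hConvexityDefect hhint (hintervalIntegrable hgint) hφab.ne)
  -- domination is only assumed on `(0,1)`, while the bound is needed on `(0,1]`
  filter_upwards [volume.ae_ne 1] with t ht1 ht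
  exact (Real.norm_eq_abs _).trans_le <| hfdom a ha b hb t ⟨ht.1, ht.2.lt_of_ne ht1⟩

theorem stmt3 (a b : ℝ) (hab : a < b) (h φ f g : ℝ → ℝ)
    (hh : ∀ t ∈ Set.Ioo (0:ℝ) 1, 0 < h t)
    (hhint : IntervalIntegrable h MeasureTheory.volume 0 1)
    (hφmaps : Set.MapsTo φ (Set.Icc a b) (Set.Icc a b))
    (hφaff : ∀ x ∈ Set.Icc a b, ∀ y ∈ Set.Icc a b, ∀ l ∈ Set.Icc (0:ℝ) 1,
      φ (l * x + (1 - l) * y) = l * φ x + (1 - l) * φ y)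
    (hφcont : ContinuousOn φ (Set.Icc a b))
    (hφab : φ a < φ b)
    (hg0 : ∀ x ∈ Set.Icc a b, 0 ≤ g x)
    (hgconv : PhiHConvexOn (Set.Icc a b) h φ g)
    (hgint : IntegrableOn g (Set.Icc a b))
    (hf0 : ∀ x ∈ Set.Icc a b, 0 ≤ f x)
    (hfint : IntegrableOn f (Set.Icc a b))
    (hfdom : GPhiHConvexDominated (Set.Icc a b) h φ g f) :
    |(f (φ a) + f (φ b)) * (∫ t in (0:ℝ)..1, h t) -
        (1 / (φ b - φ a)) * ∫ x in φ a..φ b, f x| ≤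
      (g (φ a) + g (φ b)) * (∫ t in (0:ℝ)..1, h t) -
        (1 / (φ b - φ a)) * ∫ x in φ a..φ b, g x :=
  stmt3_general a b hab h φ f g hhint hφmaps hφab hgint hfint hfdom
end

section
/- Let a < b, let φ : [a,b] → [a,b] be an affine continuous map with φ(a) < φ(b), let g : [a,b] → [0,∞) be φ-convex and Lebesgue integrable, and let f : [a,b] → [0,∞) be Lebesgue integrable and (g,φ)-convex dominated on [a,b] (i.e. (g,φ_h)-convex dominated with h(t) = t). Then |(1/(φ(b) − φ(a))) ∫_{φ(a)}^{φ(b)} f(x) dx − f((φ(a) + φ(b))/2)| ≤ (1/(φ(b) − φ(a))) ∫_{φ(a)}^{φ(b)} g(x) dx − g((φ(a) + φ(b))/2). -/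
open MeasureTheory Set

/-! Taking `t = 1/2` in the domination inequality at preimages of `u` and `φ a + φ b - u`
(which exist by the intermediate value theorem) bounds the symmetrized midpoint defect
`(f u + f (φ a + φ b - u)) / 2 - f ((φ a + φ b) / 2)` of `f` by that of `g`, pointwise on
`[φ a, φ b]`. Integrating, and using that the reflection `u ↦ φ a + φ b - u` preserves the
integral, gives the estimate. -/

theorem GPhiHConvexDominated.abs_midpoint_le {I : Set ℝ} {φ g f : ℝ → ℝ}
    (hdom : GPhiHConvexDominated I (fun t => t) φ g f) {u v : ℝ}
    (hu : u ∈ φ '' I) (hv : v ∈ φ '' I) :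
    |(f u + f v) / 2 - f ((u + v) / 2)| ≤ (g u + g v) / 2 - g ((u + v) / 2) := by
  obtain ⟨x, hx, rfl⟩ := hu
  obtain ⟨y, hy, rfl⟩ := hv
  have h := hdom x hx y hy (1 / 2) ⟨by norm_num, by norm_num⟩
  rw [show 1 / 2 * φ x + (1 - 1 / 2) * φ y = (φ x + φ y) / 2 by ring] at h
  convert h using 2 <;> ring

theorem IntervalIntegrable.comp_reflect {f : ℝ → ℝ} {p q : ℝ}
    (hf : IntervalIntegrable f volume p q) :
    IntervalIntegrable (fun u => f (p + q - u)) volume p q := by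
  simpa using (hf.comp_sub_left (p + q)).symm

theorem intervalIntegral.integral_comp_reflect (f : ℝ → ℝ) (p q : ℝ) :
    ∫ u in p..q, f (p + q - u) = ∫ u in p..q, f u := by
  rw [intervalIntegral.integral_comp_sub_left f (p + q), add_sub_cancel_right,
    add_sub_cancel_left]

theorem IntervalIntegrable.symmetrize {f : ℝ → ℝ} {p q : ℝ}
    (hf : IntervalIntegrable f volume p q) :
    IntervalIntegrable (fun u => (f u + f (p + q - u)) / 2) volume p q :=
  (hf.add hf.comp_reflect).div_const 2

theorem intervalIntegral.integral_symmetrize_sub_const {f : ℝ → ℝ} {p q : ℝ}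
    (hf : IntervalIntegrable f volume p q) (c : ℝ) :
    ∫ u in p..q, ((f u + f (p + q - u)) / 2 - c) = ∫ u in p..q, (f u - c) := by
  rw [intervalIntegral.integral_sub hf.symmetrize intervalIntegrable_const,
    intervalIntegral.integral_div, intervalIntegral.integral_add hf hf.comp_reflect,
    intervalIntegral.integral_comp_reflect,
    intervalIntegral.integral_sub hf intervalIntegrable_const]
  ring

-- The integrals below parse as `∫ x in p..q, (f x - f ((p + q) / 2))`, as in `stmt4`.
theorem abs_average_sub_midpoint_le {f g : ℝ → ℝ} {p q : ℝ} (hpq : p < q)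
    (hf : IntervalIntegrable f volume p q) (hg : IntervalIntegrable g volume p q)
    (hfg : ∀ u ∈ Icc p q, |(f u + f (p + q - u)) / 2 - f ((p + q) / 2)| ≤
      (g u + g (p + q - u)) / 2 - g ((p + q) / 2)) :
    |(1 / (q - p)) * ∫ x in p..q, f x - f ((p + q) / 2)| ≤
      (1 / (q - p)) * ∫ x in p..q, g x - g ((p + q) / 2) := by
  rw [← intervalIntegral.integral_symmetrize_sub_const hf,
    ← intervalIntegral.integral_symmetrize_sub_const hg, abs_mul,
    abs_of_pos (one_div_pos.mpr (sub_pos.mpr hpq))]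
  gcongr
  exact (intervalIntegral.abs_integral_le_integral_abs hpq.le).trans
    (intervalIntegral.integral_mono_on hpq.le
      (hf.symmetrize.sub intervalIntegrable_const).abs
      (hg.symmetrize.sub intervalIntegrable_const) hfg)

theorem stmt4_general (a b : ℝ) (hab : a < b) (φ f g : ℝ → ℝ)
    (hφmaps : Set.MapsTo φ (Set.Icc a b) (Set.Icc a b))
    (hφcont : ContinuousOn φ (Set.Icc a b))
    (hφab : φ a < φ b)
    (hgint : IntegrableOn g (Set.Icc a b))
    (hfint : IntegrableOn f (Set.Icc a b))
    (hfdom : GPhiHConvexDominated (Set.Icc a b) (fun t => t) φ g f) :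
    |(1 / (φ b - φ a)) * ∫ x in φ a..φ b, f x - f ((φ a + φ b) / 2)| ≤
      (1 / (φ b - φ a)) * ∫ x in φ a..φ b, g x - g ((φ a + φ b) / 2) := by
  have hsub : Icc (φ a) (φ b) ⊆ Icc a b :=
    Icc_subset_Icc (hφmaps (left_mem_Icc.mpr hab.le)).1 (hφmaps (right_mem_Icc.mpr hab.le)).2
  have himage : Icc (φ a) (φ b) ⊆ φ '' Icc a b := intermediate_value_Icc hab.le hφcont
  refine abs_average_sub_midpoint_le hφab
    ((intervalIntegrable_iff_integrableOn_Icc_of_le hφab.le).mpr (hfint.mono_set hsub))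
    ((intervalIntegrable_iff_integrableOn_Icc_of_le hφab.le).mpr (hgint.mono_set hsub))
    fun u hu => ?_
  have hreflect : φ a + φ b - u ∈ Icc (φ a) (φ b) := ⟨by linarith [hu.2], by linarith [hu.1]⟩
  simpa using hfdom.abs_midpoint_le (himage hu) (himage hreflect)

theorem stmt4 (a b : ℝ) (hab : a < b) (φ f g : ℝ → ℝ)
    (hφmaps : Set.MapsTo φ (Set.Icc a b) (Set.Icc a b))
    (hφaff : ∀ x ∈ Set.Icc a b, ∀ y ∈ Set.Icc a b, ∀ l ∈ Set.Icc (0:ℝ) 1,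
      φ (l * x + (1 - l) * y) = l * φ x + (1 - l) * φ y)
    (hφcont : ContinuousOn φ (Set.Icc a b))
    (hφab : φ a < φ b)
    (hg0 : ∀ x ∈ Set.Icc a b, 0 ≤ g x)
    (hgconv : PhiHConvexOn (Set.Icc a b) (fun t => t) φ g)
    (hgint : IntegrableOn g (Set.Icc a b))
    (hf0 : ∀ x ∈ Set.Icc a b, 0 ≤ f x)
    (hfint : IntegrableOn f (Set.Icc a b))
    (hfdom : GPhiHConvexDominated (Set.Icc a b) (fun t => t) φ g f) :
    |(1 / (φ b - φ a)) * ∫ x in φ a..φ b, f x - f ((φ a + φ b) / 2)| ≤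
      (1 / (φ b - φ a)) * ∫ x in φ a..φ b, g x - g ((φ a + φ b) / 2) :=
  stmt4_general a b hab φ f g hφmaps hφcont hφab hgint hfint hfdom
end

section
/- Let a < b, let φ : [a,b] → [a,b] be an affine continuous map with φ(a) < φ(b), let g : [a,b] → [0,∞) be φ-convex and Lebesgue integrable, and let f : [a,b] → [0,∞) be Lebesgue integrable and (g,φ)-convex dominated on [a,b] (i.e. (g,φ_h)-convex dominated with h(t) = t). Then |(f(φ(a)) + f(φ(b)))/2 − (1/(φ(b) − φ(a))) ∫_{φ(a)}^{φ(b)} f(x) dx| ≤ (g(φ(a)) + g(φ(b)))/2 − (1/(φ(b) − φ(a))) ∫_{φ(a)}^{φ(b)} g(x) dx. -/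
open MeasureTheory Set

/-!
Substituting `x = t A + (1 - t) B` turns the Hermite–Hadamard gap `(F A + F B) / 2 - ⨍ F` into
the integral over `t ∈ [0, 1]` of the convexity defect `t F A + (1 - t) F B - F (t A + (1 - t) B)`.
Domination bounds the absolute defect of `f` pointwise by the defect of `g`, and integrating this
bound gives the claim.
-/

noncomputable def hadamardGap (F : ℝ → ℝ) (A B : ℝ) : ℝ :=
  (F A + F B) / 2 - (1 / (B - A)) * ∫ x in A..B, F x

section ConvexCombination

variable {F : ℝ → ℝ} {A B : ℝ}

lemma integral_zero_one_mul_add_one_sub_mul (c d : ℝ) :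
    ∫ t in (0:ℝ)..1, (t * c + (1 - t) * d) = (c + d) / 2 := by
  have hline : ∀ t : ℝ, t * c + (1 - t) * d = t * (c - d) + d := fun t => by ring
  simp only [hline]
  rw [intervalIntegral.integral_add (intervalIntegral.intervalIntegrable_id.mul_const _)
      intervalIntegrable_const, intervalIntegral.integral_mul_const, integral_id,
    intervalIntegral.integral_const, smul_eq_mul]
  ring

lemma intervalIntegrable_comp_mul_add_one_sub_mul (hF : IntervalIntegrable F volume A B) :
    IntervalIntegrable (fun t => F (t * A + (1 - t) * B)) volume 0 1 := by
  rcases eq_or_ne A B with rfl | hAB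
  · simp only [← add_mul, add_sub_cancel, one_mul]
    exact intervalIntegrable_const
  have hline : ∀ t : ℝ, t * A + (1 - t) * B = (A - B) * t + B := fun t => by ring
  have hcomp := (hF.comp_add_right B).comp_mul_left (c := A - B)
  rw [sub_self, zero_div, div_self (sub_ne_zero.2 hAB)] at hcomp
  simpa only [hline] using hcomp.symm

lemma integral_comp_mul_add_one_sub_mul (hAB : A ≠ B) :
    ∫ t in (0:ℝ)..1, F (t * A + (1 - t) * B) = (1 / (B - A)) * ∫ x in A..B, F x := by
  have hline : ∀ t : ℝ, t * A + (1 - t) * B = (A - B) * t + B := fun t => by ring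
  calc ∫ t in (0:ℝ)..1, F (t * A + (1 - t) * B)
      = (A - B)⁻¹ * ∫ x in B..A, F x := by
        simp only [hline]
        rw [intervalIntegral.integral_comp_mul_add F (sub_ne_zero.2 hAB), smul_eq_mul]
        simp
    _ = (1 / (B - A)) * ∫ x in A..B, F x := by
        rw [intervalIntegral.integral_symm, ← neg_sub B A, inv_neg]
        ring

lemma intervalIntegrable_chord_sub_comp (hF : IntervalIntegrable F volume A B) :
    IntervalIntegrable (fun t => t * F A + (1 - t) * F B - F (t * A + (1 - t) * B)) volume 0 1 :=
  (Continuous.intervalIntegrable (by fun_prop) 0 1).sub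
    (intervalIntegrable_comp_mul_add_one_sub_mul hF)

lemma hadamardGap_eq_integral (hAB : A ≠ B) (hF : IntervalIntegrable F volume A B) :
    hadamardGap F A B =
      ∫ t in (0:ℝ)..1, (t * F A + (1 - t) * F B - F (t * A + (1 - t) * B)) := by
  have hchord : IntervalIntegrable (fun t : ℝ => t * F A + (1 - t) * F B) volume 0 1 :=
    Continuous.intervalIntegrable (by fun_prop) 0 1
  rw [intervalIntegral.integral_sub hchord (intervalIntegrable_comp_mul_add_one_sub_mul hF),
    integral_zero_one_mul_add_one_sub_mul, integral_comp_mul_add_one_sub_mul hAB, hadamardGap]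

end ConvexCombination

lemma abs_intervalIntegral_le_of_forall_mem_Ioo {F G : ℝ → ℝ} {a b : ℝ} (hab : a ≤ b)
    (hF : IntervalIntegrable F volume a b) (hG : IntervalIntegrable G volume a b)
    (h : ∀ t ∈ Ioo a b, |F t| ≤ G t) :
    |∫ t in a..b, F t| ≤ ∫ t in a..b, G t := by
  rw [abs_le, ← intervalIntegral.integral_neg]
  exact ⟨intervalIntegral.integral_mono_on_of_le_Ioo hab hG.neg hF
      fun t ht => (abs_le.1 (h t ht)).1,
    intervalIntegral.integral_mono_on_of_le_Ioo hab hF hG fun t ht => (abs_le.1 (h t ht)).2⟩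

lemma abs_hadamardGap_le_hadamardGap {f g : ℝ → ℝ} {A B : ℝ} (hAB : A ≠ B)
    (hf : IntervalIntegrable f volume A B) (hg : IntervalIntegrable g volume A B)
    (hdom : ∀ t ∈ Ioo (0:ℝ) 1,
      |t * f A + (1 - t) * f B - f (t * A + (1 - t) * B)| ≤
        t * g A + (1 - t) * g B - g (t * A + (1 - t) * B)) :
    |hadamardGap f A B| ≤ hadamardGap g A B := by
  rw [hadamardGap_eq_integral hAB hf, hadamardGap_eq_integral hAB hg]
  exact abs_intervalIntegral_le_of_forall_mem_Ioo zero_le_one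
    (intervalIntegrable_chord_sub_comp hf) (intervalIntegrable_chord_sub_comp hg) hdom

theorem stmt5_general (a b : ℝ) (hab : a < b) (φ f g : ℝ → ℝ)
    (hφmaps : Set.MapsTo φ (Set.Icc a b) (Set.Icc a b))
    (hφab : φ a < φ b)
    (hgint : IntegrableOn g (Set.Icc a b))
    (hfint : IntegrableOn f (Set.Icc a b))
    (hfdom : GPhiHConvexDominated (Set.Icc a b) (fun t => t) φ g f) :
    |(f (φ a) + f (φ b)) / 2 - (1 / (φ b - φ a)) * ∫ x in φ a..φ b, f x| ≤
      (g (φ a) + g (φ b)) / 2 - (1 / (φ b - φ a)) * ∫ x in φ a..φ b, g x := by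
  have ha : a ∈ Icc a b := left_mem_Icc.2 hab.le
  have hb : b ∈ Icc a b := right_mem_Icc.2 hab.le
  have hsub : uIcc (φ a) (φ b) ⊆ Icc a b := uIcc_subset_Icc (hφmaps ha) (hφmaps hb)
  exact abs_hadamardGap_le_hadamardGap hφab.ne (hfint.mono_set hsub).intervalIntegrable
    (hgint.mono_set hsub).intervalIntegrable (hfdom a ha b hb)

theorem stmt5 (a b : ℝ) (hab : a < b) (φ f g : ℝ → ℝ)
    (hφmaps : Set.MapsTo φ (Set.Icc a b) (Set.Icc a b))
    (hφaff : ∀ x ∈ Set.Icc a b, ∀ y ∈ Set.Icc a b, ∀ l ∈ Set.Icc (0:ℝ) 1,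
      φ (l * x + (1 - l) * y) = l * φ x + (1 - l) * φ y)
    (hφcont : ContinuousOn φ (Set.Icc a b))
    (hφab : φ a < φ b)
    (hg0 : ∀ x ∈ Set.Icc a b, 0 ≤ g x)
    (hgconv : PhiHConvexOn (Set.Icc a b) (fun t => t) φ g)
    (hgint : IntegrableOn g (Set.Icc a b))
    (hf0 : ∀ x ∈ Set.Icc a b, 0 ≤ f x)
    (hfint : IntegrableOn f (Set.Icc a b))
    (hfdom : GPhiHConvexDominated (Set.Icc a b) (fun t => t) φ g f) :
    |(f (φ a) + f (φ b)) / 2 - (1 / (φ b - φ a)) * ∫ x in φ a..φ b, f x| ≤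
      (g (φ a) + g (φ b)) / 2 - (1 / (φ b - φ a)) * ∫ x in φ a..φ b, g x :=
  stmt5_general a b hab φ f g hφmaps hφab hgint hfint hfdom
end

section
/- Let a < b, let s ∈ (0,1), let φ : [a,b] → [a,b] be an affine continuous map with φ(a) < φ(b), let g : [a,b] → [0,∞) be φ_s-convex and Lebesgue integrable, and let f : [a,b] → [0,∞) be Lebesgue integrable and (g,φ_s)-convex dominated on [a,b] (i.e. (g,φ_h)-convex dominated with h(t) = t^s). Then |(1/(φ(b) − φ(a))) ∫_{φ(a)}^{φ(b)} f(x) dx − 2^{s−1} f((φ(a) + φ(b))/2)| ≤ (1/(φ(b) − φ(a))) ∫_{φ(a)}^{φ(b)} g(x) dx − 2^{s−1} g((φ(a) + φ(b))/2). -/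
/-!
Taking `t = 1/2` in the domination inequality and multiplying by `2^(s-1)` (note
`2^(s-1) (1/2)^s = 1/2`) gives, for every `u ∈ [φ a, φ b]`,
`|(f u + f u') / 2 - 2^(s-1) f m| ≤ (g u + g u') / 2 - 2^(s-1) g m`, where
`u' = φ a + φ b - u` is the reflection of `u` and `m` the midpoint; both `u` and `u'` are
values of `φ` on `[a, b]` because `φ` is affine. Integrating over `[φ a, φ b]`, where the
reflection preserves integrals, and dividing by `φ b - φ a` gives the theorem.
-/

open MeasureTheory Set

lemma IntervalIntegrable.comp_reflect_s6 {F : ℝ → ℝ} {c d : ℝ}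
    (hF : IntervalIntegrable F volume c d) :
    IntervalIntegrable (fun u => F (c + d - u)) volume c d := by
  simpa using (hF.comp_sub_left (c + d)).symm

namespace intervalIntegral

lemma integral_half_add_reflect_sub {F : ℝ → ℝ} {c d : ℝ}
    (hF : IntervalIntegrable F volume c d) (K : ℝ) :
    ∫ u in c..d, ((F u + F (c + d - u)) / 2 - K) = ∫ u in c..d, (F u - K) := by
  have hreflect : ∫ u in c..d, F (c + d - u) = ∫ u in c..d, F u := by
    rw [integral_comp_sub_left F (c + d)]
    simp
  rw [integral_sub ((hF.add hF.comp_reflect_s6).div_const 2) intervalIntegrable_const,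
    integral_div, integral_add hF hF.comp_reflect_s6, hreflect,
    integral_sub hF intervalIntegrable_const]
  ring

end intervalIntegral

/-- The integrals extend to the end of their lines, so they are integrals of
`f x - k * f ((c + d) / 2)`; after the factor `1 / (d - c)` this is still the mean of `f`
minus `k * f ((c + d) / 2)`. -/
lemma abs_mean_sub_le_of_abs_half_add_reflect_sub_le {f g : ℝ → ℝ} {c d k : ℝ} (hcd : c < d)
    (hf : IntervalIntegrable f volume c d) (hg : IntervalIntegrable g volume c d)
    (hfg : ∀ u ∈ Icc c d, |(f u + f (c + d - u)) / 2 - k * f ((c + d) / 2)| ≤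
      (g u + g (c + d - u)) / 2 - k * g ((c + d) / 2)) :
    |(1 / (d - c)) * ∫ x in c..d, f x - k * f ((c + d) / 2)| ≤
      (1 / (d - c)) * ∫ x in c..d, g x - k * g ((c + d) / 2) := by
  have hlen : 0 < 1 / (d - c) := one_div_pos.2 (sub_pos.2 hcd)
  have hgap : ∀ {F : ℝ → ℝ}, IntervalIntegrable F volume c d → IntervalIntegrable
      (fun u => (F u + F (c + d - u)) / 2 - k * F ((c + d) / 2)) volume c d :=
    fun hF => ((hF.add hF.comp_reflect_s6).div_const 2).sub intervalIntegrable_const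
  rw [abs_mul, abs_of_pos hlen, ← intervalIntegral.integral_half_add_reflect_sub hf,
    ← intervalIntegral.integral_half_add_reflect_sub hg]
  gcongr
  calc _ ≤ ∫ u in c..d, |(f u + f (c + d - u)) / 2 - k * f ((c + d) / 2)| :=
        intervalIntegral.abs_integral_le_integral_abs hcd.le
    _ ≤ _ := intervalIntegral.integral_mono_on hcd.le (hgap hf).abs (hgap hg) hfg

lemma exists_mem_Icc_apply_eq_and_apply_eq_reflect {φ : ℝ → ℝ} {a b u : ℝ} (hab : a ≤ b)
    (hφaff : ∀ x ∈ Icc a b, ∀ y ∈ Icc a b, ∀ l ∈ Icc (0:ℝ) 1,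
      φ (l * x + (1 - l) * y) = l * φ x + (1 - l) * φ y)
    (hφab : φ a ≤ φ b) (hu : u ∈ Icc (φ a) (φ b)) :
    ∃ x ∈ Icc a b, ∃ y ∈ Icc a b, φ x = u ∧ φ y = φ a + φ b - u := by
  have ha : a ∈ Icc a b := left_mem_Icc.2 hab
  have hb : b ∈ Icc a b := right_mem_Icc.2 hab
  rw [← segment_eq_Icc hφab] at hu
  obtain ⟨p, q, hp, hq, hpq, rfl⟩ := hu
  obtain rfl : q = 1 - p := eq_sub_of_add_eq' hpq
  refine ⟨p * a + (1 - p) * b, convex_Icc a b ha hb hp hq hpq,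
    (1 - p) * a + (1 - (1 - p)) * b, convex_Icc a b ha hb hq (by linarith) (by ring), ?_, ?_⟩
  · simp only [smul_eq_mul]
    exact hφaff a ha b hb p ⟨hp, by linarith⟩
  · rw [hφaff a ha b hb (1 - p) ⟨hq, by linarith⟩]
    simp only [smul_eq_mul]
    ring

lemma GPhiHConvexDominated.abs_half_add_sub_le {I : Set ℝ} {s : ℝ} {φ f g : ℝ → ℝ}
    (hdom : GPhiHConvexDominated I (fun t => t ^ s) φ g f) {x y : ℝ}
    (hx : x ∈ I) (hy : y ∈ I) :
    |(f (φ x) + f (φ y)) / 2 - 2 ^ (s - 1) * f ((φ x + φ y) / 2)| ≤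
      (g (φ x) + g (φ y)) / 2 - 2 ^ (s - 1) * g ((φ x + φ y) / 2) := by
  have hk : (0:ℝ) < 2 ^ (s - 1) := by positivity
  have hkhalf : (2:ℝ) ^ (s - 1) * (1 / 2) ^ s = 1 / 2 := by
    rw [Real.div_rpow zero_le_one zero_le_two, Real.one_rpow, mul_one_div,
      ← Real.rpow_sub zero_lt_two, sub_sub_cancel_left, Real.rpow_neg_one, one_div]
  have hrescale : ∀ F : ℝ → ℝ,
      (F (φ x) + F (φ y)) / 2 - 2 ^ (s - 1) * F ((φ x + φ y) / 2) = 2 ^ (s - 1) *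
        ((1 / 2) ^ s * F (φ x) + (1 / 2) ^ s * F (φ y) - F (1 / 2 * φ x + 1 / 2 * φ y)) := by
    intro F
    rw [show 1 / 2 * φ x + 1 / 2 * φ y = (φ x + φ y) / 2 by ring]
    linear_combination (-(F (φ x) + F (φ y))) * hkhalf
  have hhalf := hdom x hx y hy (1 / 2) ⟨by norm_num, by norm_num⟩
  rw [show (1:ℝ) - 1 / 2 = 1 / 2 by norm_num] at hhalf
  rw [hrescale f, hrescale g, abs_mul, abs_of_pos hk]
  exact mul_le_mul_of_nonneg_left hhalf hk.le

theorem stmt6_general (a b : ℝ) (hab : a < b) (s : ℝ)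
    (φ f g : ℝ → ℝ)
    (hφmaps : Set.MapsTo φ (Set.Icc a b) (Set.Icc a b))
    (hφaff : ∀ x ∈ Set.Icc a b, ∀ y ∈ Set.Icc a b, ∀ l ∈ Set.Icc (0:ℝ) 1,
      φ (l * x + (1 - l) * y) = l * φ x + (1 - l) * φ y)
    (hφab : φ a < φ b)
    (hgint : IntegrableOn g (Set.Icc a b))
    (hfint : IntegrableOn f (Set.Icc a b))
    (hfdom : GPhiHConvexDominated (Set.Icc a b) (fun t => t ^ s) φ g f) :
    |(1 / (φ b - φ a)) * ∫ x in φ a..φ b, f x -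
        (2:ℝ) ^ (s - 1) * f ((φ a + φ b) / 2)| ≤
      (1 / (φ b - φ a)) * ∫ x in φ a..φ b, g x -
        (2:ℝ) ^ (s - 1) * g ((φ a + φ b) / 2) := by
  have hsub : uIcc (φ a) (φ b) ⊆ Icc a b := by
    rw [uIcc_of_le hφab.le]
    exact Icc_subset_Icc (hφmaps (left_mem_Icc.2 hab.le)).1 (hφmaps (right_mem_Icc.2 hab.le)).2
  refine abs_mean_sub_le_of_abs_half_add_reflect_sub_le hφab
    (hfint.mono_set hsub).intervalIntegrable (hgint.mono_set hsub).intervalIntegrable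
    fun u hu => ?_
  obtain ⟨x, hx, y, hy, hφx, hφy⟩ :=
    exists_mem_Icc_apply_eq_and_apply_eq_reflect hab.le hφaff hφab.le hu
  have hmid := hfdom.abs_half_add_sub_le hx hy
  rwa [hφx, hφy, add_sub_cancel] at hmid

theorem stmt6 (a b : ℝ) (hab : a < b) (s : ℝ) (hs : s ∈ Set.Ioo (0:ℝ) 1)
    (φ f g : ℝ → ℝ)
    (hφmaps : Set.MapsTo φ (Set.Icc a b) (Set.Icc a b))
    (hφaff : ∀ x ∈ Set.Icc a b, ∀ y ∈ Set.Icc a b, ∀ l ∈ Set.Icc (0:ℝ) 1,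
      φ (l * x + (1 - l) * y) = l * φ x + (1 - l) * φ y)
    (hφcont : ContinuousOn φ (Set.Icc a b))
    (hφab : φ a < φ b)
    (hg0 : ∀ x ∈ Set.Icc a b, 0 ≤ g x)
    (hgconv : PhiHConvexOn (Set.Icc a b) (fun t => t ^ s) φ g)
    (hgint : IntegrableOn g (Set.Icc a b))
    (hf0 : ∀ x ∈ Set.Icc a b, 0 ≤ f x)
    (hfint : IntegrableOn f (Set.Icc a b))
    (hfdom : GPhiHConvexDominated (Set.Icc a b) (fun t => t ^ s) φ g f) :
    |(1 / (φ b - φ a)) * ∫ x in φ a..φ b, f x -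
        (2:ℝ) ^ (s - 1) * f ((φ a + φ b) / 2)| ≤
      (1 / (φ b - φ a)) * ∫ x in φ a..φ b, g x -
        (2:ℝ) ^ (s - 1) * g ((φ a + φ b) / 2) :=
  stmt6_general a b hab s φ f g hφmaps hφaff hφab hgint hfint hfdom
end

section
/- Let a < b, let s ∈ (0,1), let φ : [a,b] → [a,b] be an affine continuous map with φ(a) < φ(b), let g : [a,b] → [0,∞) be φ_s-convex and Lebesgue integrable, and let f : [a,b] → [0,∞) be Lebesgue integrable and (g,φ_s)-convex dominated on [a,b] (i.e. (g,φ_h)-convex dominated with h(t) = t^s). Then |(f(φ(a)) + f(φ(b)))/(s+1) − (1/(φ(b) − φ(a))) ∫_{φ(a)}^{φ(b)} f(x) dx| ≤ (g(φ(a)) + g(φ(b)))/(s+1) − (1/(φ(b) − φ(a))) ∫_{φ(a)}^{φ(b)} g(x) dx. -/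
/-!
With `x = t φ(a) + (1 - t) φ(b)` and `∫₀¹ tˢ dt = ∫₀¹ (1 - t)ˢ dt = 1 / (s + 1)`, each side of
the inequality is the integral over `t ∈ [0, 1]` of the convexity defect
`tˢ u(φ a) + (1 - t)ˢ u(φ b) - u(t φ(a) + (1 - t) φ(b))` of `u = f` resp. `u = g`.
Dominance bounds the absolute value of the defect of `f` pointwise by the defect of `g`.
-/

open MeasureTheory Set

def convexityDefect (h u : ℝ → ℝ) (c d t : ℝ) : ℝ :=
  h t * u c + h (1 - t) * u d - u (t * c + (1 - t) * d)

namespace intervalIntegral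

variable {c d s : ℝ} {u : ℝ → ℝ}

theorem integral_rpow_zero_one (hs : -1 < s) : ∫ t in (0 : ℝ)..1, t ^ s = 1 / (s + 1) := by
  rw [integral_rpow (Or.inl hs), Real.one_rpow, Real.zero_rpow (by linarith), sub_zero]

theorem integral_one_sub_rpow_zero_one (hs : -1 < s) :
    ∫ t in (0 : ℝ)..1, (1 - t) ^ s = 1 / (s + 1) := by
  rw [integral_comp_sub_left (fun t : ℝ => t ^ s), sub_self, sub_zero, integral_rpow_zero_one hs]

theorem intervalIntegrable_one_sub_rpow (hs : -1 < s) :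
    IntervalIntegrable (fun t : ℝ => (1 - t) ^ s) volume 0 1 := by
  simpa using ((intervalIntegrable_rpow' hs (a := 0) (b := 1)).comp_sub_left 1).symm

theorem _root_.IntervalIntegrable.comp_mul_add_one_sub_mul (hcd : c ≠ d)
    (hu : IntervalIntegrable u volume c d) :
    IntervalIntegrable (fun t => u (t * c + (1 - t) * d)) volume 0 1 := by
  have key := (hu.comp_add_right d).comp_mul_left (c := c - d)
  rw [div_self (sub_ne_zero.2 hcd), sub_self, zero_div] at key
  convert key.symm using 3 with t
  ring

theorem integral_comp_mul_add_one_sub_mul (hcd : c ≠ d) :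
    ∫ t in (0 : ℝ)..1, u (t * c + (1 - t) * d) = 1 / (d - c) * ∫ x in c..d, u x := by
  have hdc : c - d ≠ 0 := sub_ne_zero.2 hcd
  have key := integral_comp_mul_add u hdc d (a := 0) (b := 1)
  simp only [mul_zero, zero_add, mul_one, sub_add_cancel, integral_symm c d, smul_eq_mul] at key
  convert key using 1
  · congr 1; ext t; ring_nf
  · field_simp; ring

theorem _root_.IntervalIntegrable.convexityDefect_rpow (hs : -1 < s) (hcd : c ≠ d)
    (hu : IntervalIntegrable u volume c d) :
    IntervalIntegrable (convexityDefect (· ^ s) u c d) volume 0 1 :=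
  (((intervalIntegrable_rpow' hs).mul_const _).add
    ((intervalIntegrable_one_sub_rpow hs).mul_const _)).sub (hu.comp_mul_add_one_sub_mul hcd)

theorem integral_convexityDefect_rpow (hs : -1 < s) (hcd : c ≠ d)
    (hu : IntervalIntegrable u volume c d) :
    ∫ t in (0 : ℝ)..1, convexityDefect (· ^ s) u c d t =
      (u c + u d) / (s + 1) - 1 / (d - c) * ∫ x in c..d, u x := by
  have hrpow := (intervalIntegrable_rpow' hs (a := 0) (b := 1)).mul_const (u c)
  have hrpow' := (intervalIntegrable_one_sub_rpow hs).mul_const (u d)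
  unfold convexityDefect
  rw [integral_sub (hrpow.add hrpow') (hu.comp_mul_add_one_sub_mul hcd),
    integral_add hrpow hrpow', integral_mul_const, integral_mul_const, integral_rpow_zero_one hs,
    integral_one_sub_rpow_zero_one hs, integral_comp_mul_add_one_sub_mul hcd]
  ring

end intervalIntegral

open intervalIntegral in
theorem stmt7_general (a b : ℝ) (hab : a < b) (s : ℝ) (hs : s ∈ Set.Ioo (0:ℝ) 1)
    (φ f g : ℝ → ℝ)
    (hφmaps : Set.MapsTo φ (Set.Icc a b) (Set.Icc a b))
    (hφab : φ a < φ b)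
    (hgint : IntegrableOn g (Set.Icc a b))
    (hfint : IntegrableOn f (Set.Icc a b))
    (hfdom : GPhiHConvexDominated (Set.Icc a b) (fun t => t ^ s) φ g f) :
    |(f (φ a) + f (φ b)) / (s + 1) - (1 / (φ b - φ a)) * ∫ x in φ a..φ b, f x| ≤
      (g (φ a) + g (φ b)) / (s + 1) - (1 / (φ b - φ a)) * ∫ x in φ a..φ b, g x := by
  have ha : a ∈ Icc a b := left_mem_Icc.2 hab.le
  have hb : b ∈ Icc a b := right_mem_Icc.2 hab.le
  have hsub : Icc (φ a) (φ b) ⊆ Icc a b := Icc_subset_Icc (hφmaps ha).1 (hφmaps hb).2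
  have hfi : IntervalIntegrable f volume (φ a) (φ b) :=
    (intervalIntegrable_iff_integrableOn_Icc_of_le hφab.le).2 (hfint.mono_set hsub)
  have hgi : IntervalIntegrable g volume (φ a) (φ b) :=
    (intervalIntegrable_iff_integrableOn_Icc_of_le hφab.le).2 (hgint.mono_set hsub)
  have hs' : -1 < s := by linarith [hs.1]
  rw [← integral_convexityDefect_rpow hs' hφab.ne hfi,
    ← integral_convexityDefect_rpow hs' hφab.ne hgi]
  calc _ ≤ ∫ t in (0 : ℝ)..1, |convexityDefect (· ^ s) f (φ a) (φ b) t| :=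
        abs_integral_le_integral_abs zero_le_one
    _ ≤ _ := integral_mono_on_of_le_Ioo zero_le_one (hfi.convexityDefect_rpow hs' hφab.ne).abs
        (hgi.convexityDefect_rpow hs' hφab.ne) fun t ht => hfdom a ha b hb t ht

theorem stmt7 (a b : ℝ) (hab : a < b) (s : ℝ) (hs : s ∈ Set.Ioo (0:ℝ) 1)
    (φ f g : ℝ → ℝ)
    (hφmaps : Set.MapsTo φ (Set.Icc a b) (Set.Icc a b))
    (hφaff : ∀ x ∈ Set.Icc a b, ∀ y ∈ Set.Icc a b, ∀ l ∈ Set.Icc (0:ℝ) 1,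
      φ (l * x + (1 - l) * y) = l * φ x + (1 - l) * φ y)
    (hφcont : ContinuousOn φ (Set.Icc a b))
    (hφab : φ a < φ b)
    (hg0 : ∀ x ∈ Set.Icc a b, 0 ≤ g x)
    (hgconv : PhiHConvexOn (Set.Icc a b) (fun t => t ^ s) φ g)
    (hgint : IntegrableOn g (Set.Icc a b))
    (hf0 : ∀ x ∈ Set.Icc a b, 0 ≤ f x)
    (hfint : IntegrableOn f (Set.Icc a b))
    (hfdom : GPhiHConvexDominated (Set.Icc a b) (fun t => t ^ s) φ g f) :
    |(f (φ a) + f (φ b)) / (s + 1) - (1 / (φ b - φ a)) * ∫ x in φ a..φ b, f x| ≤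
      (g (φ a) + g (φ b)) / (s + 1) - (1 / (φ b - φ a)) * ∫ x in φ a..φ b, g x :=
  stmt7_general a b hab s hs φ f g hφmaps hφab hgint hfint hfdom
end

section
/- Let a < b, let g : [a,b] → ℝ be a convex Lebesgue integrable function, and let f : [a,b] → ℝ be a Lebesgue integrable g-convex dominated function. Then |f((a+b)/2) − (1/(b−a)) ∫_a^b f(x) dx| ≤ (1/(b−a)) ∫_a^b g(x) dx − g((a+b)/2). -/
open MeasureTheory Set

/-!
Taking `λ = 1/2` at the symmetric points `x` and `a + b - x` (whose midpoint is `(a + b)/2`)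
bounds the symmetrized midpoint defect `(f x + f (a + b - x))/2 - f ((a + b)/2)` of `f` in
absolute value by that of `g`. The reflection `x ↦ a + b - x` preserves integrals over `[a, b]`,
so the symmetrized defect of any integrable `φ` has the same integral as `φ - φ ((a + b)/2)`;
integrating the pointwise bound and dividing by `b - a` gives the inequality.
-/

namespace intervalIntegral

variable {a b : ℝ}

theorem integral_comp_add_sub (φ : ℝ → ℝ) :
    ∫ x in a..b, φ (a + b - x) = ∫ x in a..b, φ x := by
  rw [integral_comp_sub_left, add_sub_cancel_right, add_sub_cancel_left]

theorem integral_symmetrized_sub {φ : ℝ → ℝ} (hφ : IntervalIntegrable φ volume a b)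
    (c : ℝ) :
    ∫ x in a..b, ((φ x + φ (a + b - x)) / 2 - c) = ∫ x in a..b, (φ x - c) := by
  have hφc : IntervalIntegrable (fun x ↦ φ x - c) volume a b := hφ.sub intervalIntegrable_const
  have hφc' : IntervalIntegrable (fun x ↦ φ (a + b - x) - c) volume a b := by
    simpa using (hφc.comp_sub_left (a + b)).symm
  calc ∫ x in a..b, ((φ x + φ (a + b - x)) / 2 - c)
      = ((∫ x in a..b, (φ x - c)) + ∫ x in a..b, (φ (a + b - x) - c)) / 2 := by
        rw [← integral_add hφc hφc', ← integral_div]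
        congr 1 with x
        ring
    _ = ∫ x in a..b, (φ x - c) := by
        rw [integral_comp_add_sub (fun x ↦ φ x - c)]
        ring

end intervalIntegral

open intervalIntegral in
theorem abs_sub_average_le_of_abs_symmetrized_le {a b : ℝ} (hab : a < b) {f g : ℝ → ℝ}
    (hf : IntervalIntegrable f volume a b) (hg : IntervalIntegrable g volume a b)
    (hfg : ∀ x ∈ Icc a b, |(f x + f (a + b - x)) / 2 - f ((a + b) / 2)| ≤
      (g x + g (a + b - x)) / 2 - g ((a + b) / 2)) :
    |f ((a + b) / 2) - (1 / (b - a)) * ∫ x in a..b, f x| ≤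
      (1 / (b - a)) * ∫ x in a..b, g x - g ((a + b) / 2) := by
  set m := (a + b) / 2
  have hgm : IntervalIntegrable (fun x ↦ (g x + g (a + b - x)) / 2 - g m) volume a b := by
    refine ((hg.add ?_).div_const 2).sub intervalIntegrable_const
    simpa using (hg.comp_sub_left (a + b)).symm
  have key : |∫ x in a..b, (f x - f m)| ≤ ∫ x in a..b, (g x - g m) := by
    rw [← integral_symmetrized_sub hf, ← integral_symmetrized_sub hg]
    exact norm_integral_le_of_norm_le hab.le
      (ae_of_all _ fun x hx ↦ (Real.norm_eq_abs _).trans_le (hfg x (Ioc_subset_Icc_self hx)))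
      hgm
  have hba : 0 < b - a := sub_pos.mpr hab
  have hfm :
      f m - 1 / (b - a) * ∫ x in a..b, f x = -(1 / (b - a) * ∫ x in a..b, (f x - f m)) := by
    rw [integral_sub hf intervalIntegrable_const, intervalIntegral.integral_const, smul_eq_mul]
    field_simp
    ring
  rw [hfm, abs_neg, abs_mul, abs_of_pos (one_div_pos.mpr hba)]
  exact mul_le_mul_of_nonneg_left key (one_div_pos.mpr hba).le

theorem stmt11_general (a b : ℝ) (hab : a < b) (f g : ℝ → ℝ)
    (hgint : IntegrableOn g (Set.Icc a b))
    (hfint : IntegrableOn f (Set.Icc a b))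
    (hfdom : ∀ x ∈ Set.Icc a b, ∀ y ∈ Set.Icc a b, ∀ l ∈ Set.Icc (0:ℝ) 1,
      |l * f x + (1 - l) * f y - f (l * x + (1 - l) * y)| ≤
        l * g x + (1 - l) * g y - g (l * x + (1 - l) * y)) :
    |f ((a + b) / 2) - (1 / (b - a)) * ∫ x in a..b, f x| ≤
      (1 / (b - a)) * ∫ x in a..b, g x - g ((a + b) / 2) := by
  rw [← uIcc_of_le hab.le] at hfint hgint
  refine abs_sub_average_le_of_abs_symmetrized_le hab hfint.intervalIntegrable
    hgint.intervalIntegrable fun x hx ↦ ?_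
  have hx' : a + b - x ∈ Icc a b := ⟨by linarith [hx.2], by linarith [hx.1]⟩
  have half_mem : (1 / 2 : ℝ) ∈ Icc (0 : ℝ) 1 := by norm_num
  have h := hfdom x hx (a + b - x) hx' (1 / 2) half_mem
  have hmid : 1 / 2 * x + (1 - 1 / 2) * (a + b - x) = (a + b) / 2 := by ring
  have hhalf : ∀ u v : ℝ, 1 / 2 * u + (1 - 1 / 2) * v = (u + v) / 2 := fun _ _ ↦ by ring
  rwa [hmid, hhalf, hhalf] at h

theorem stmt11 (a b : ℝ) (hab : a < b) (f g : ℝ → ℝ)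
    (hgconv : ConvexOn ℝ (Set.Icc a b) g)
    (hgint : IntegrableOn g (Set.Icc a b))
    (hfint : IntegrableOn f (Set.Icc a b))
    (hfdom : ∀ x ∈ Set.Icc a b, ∀ y ∈ Set.Icc a b, ∀ l ∈ Set.Icc (0:ℝ) 1,
      |l * f x + (1 - l) * f y - f (l * x + (1 - l) * y)| ≤
        l * g x + (1 - l) * g y - g (l * x + (1 - l) * y)) :
    |f ((a + b) / 2) - (1 / (b - a)) * ∫ x in a..b, f x| ≤
      (1 / (b - a)) * ∫ x in a..b, g x - g ((a + b) / 2) :=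
  stmt11_general a b hab f g hgint hfint hfdom
end

section
/- Let a < b, let g : [a,b] → ℝ be a convex Lebesgue integrable function, and let f : [a,b] → ℝ be a Lebesgue integrable g-convex dominated function. Then |(f(a) + f(b))/2 − (1/(b−a)) ∫_a^b f(x) dx| ≤ (g(a) + g(b))/2 − (1/(b−a)) ∫_a^b g(x) dx. -/
open MeasureTheory Set

/-!
With `l = (b - x) / (b - a)`, the domination inequality at the endpoints `a` and `b` bounds `|chord f - f|` pointwise by `chord g - g` on `[a, b]`. Each side of the theorem is
`1 / (b - a)` times the integral of such a difference, because a chord integrates to the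
trapezoid value `(h a + h b) (b - a) / 2`.
-/

noncomputable def chord (h : ℝ → ℝ) (a b x : ℝ) : ℝ :=
  (b - x) / (b - a) * h a + (x - a) / (b - a) * h b

lemma continuous_chord (h : ℝ → ℝ) (a b : ℝ) : Continuous (chord h a b) := by
  unfold chord; fun_prop

lemma integral_chord (h : ℝ → ℝ) {a b : ℝ} (hab : a ≠ b) :
    ∫ x in a..b, chord h a b x = (h a + h b) * (b - a) / 2 := by
  have hba : b - a ≠ 0 := sub_ne_zero.2 hab.symm
  simp only [chord]
  rw [intervalIntegral.integral_add ((by fun_prop : Continuous _).intervalIntegrable a b)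
      ((by fun_prop : Continuous _).intervalIntegrable a b),
    intervalIntegral.integral_mul_const, intervalIntegral.integral_mul_const,
    intervalIntegral.integral_div, intervalIntegral.integral_div,
    intervalIntegral.integral_comp_sub_left fun x => x,
    intervalIntegral.integral_comp_sub_right fun x => x]
  simp only [sub_self, integral_id]
  field_simp
  ring

lemma abs_chord_sub_le_chord_sub {f g : ℝ → ℝ} {a b x : ℝ} (hab : a < b) (hx : x ∈ Icc a b)
    (hdom : ∀ l ∈ Icc (0:ℝ) 1, |l * f a + (1 - l) * f b - f (l * a + (1 - l) * b)| ≤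
      l * g a + (1 - l) * g b - g (l * a + (1 - l) * b)) :
    |chord f a b x - f x| ≤ chord g a b x - g x := by
  have hba : 0 < b - a := sub_pos.2 hab
  have hl : (b - x) / (b - a) ∈ Icc (0:ℝ) 1 :=
    ⟨div_nonneg (by linarith [hx.2]) hba.le, (div_le_one hba).2 (by linarith [hx.1])⟩
  have hcompl : 1 - (b - x) / (b - a) = (x - a) / (b - a) := by field_simp; ring
  have hpoint : (b - x) / (b - a) * a + (x - a) / (b - a) * b = x := by field_simp; ring
  simpa only [chord, hcompl, hpoint] using hdom _ hl

lemma endpoint_mean_sub_average_eq {h : ℝ → ℝ} {a b : ℝ} (hab : a ≠ b)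
    (hint : IntervalIntegrable h volume a b) :
    (h a + h b) / 2 - (1 / (b - a)) * ∫ x in a..b, h x =
      (1 / (b - a)) * ∫ x in a..b, (chord h a b x - h x) := by
  have hba : b - a ≠ 0 := sub_ne_zero.2 hab.symm
  rw [intervalIntegral.integral_sub ((continuous_chord h a b).intervalIntegrable a b) hint,
    integral_chord h hab]
  field_simp

theorem stmt12_general (a b : ℝ) (hab : a < b) (f g : ℝ → ℝ)
    (hgint : IntegrableOn g (Set.Icc a b))
    (hfint : IntegrableOn f (Set.Icc a b))
    (hfdom : ∀ x ∈ Set.Icc a b, ∀ y ∈ Set.Icc a b, ∀ l ∈ Set.Icc (0:ℝ) 1,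
      |l * f x + (1 - l) * f y - f (l * x + (1 - l) * y)| ≤
        l * g x + (1 - l) * g y - g (l * x + (1 - l) * y)) :
    |(f a + f b) / 2 - (1 / (b - a)) * ∫ x in a..b, f x| ≤
      (g a + g b) / 2 - (1 / (b - a)) * ∫ x in a..b, g x := by
  have hfi := (intervalIntegrable_iff_integrableOn_Icc_of_le hab.le).2 hfint
  have hgi := (intervalIntegrable_iff_integrableOn_Icc_of_le hab.le).2 hgint
  have hdom := hfdom a (left_mem_Icc.2 hab.le) b (right_mem_Icc.2 hab.le)
  rw [endpoint_mean_sub_average_eq hab.ne hfi, endpoint_mean_sub_average_eq hab.ne hgi, abs_mul,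
    abs_of_pos (one_div_pos.2 (sub_pos.2 hab))]
  gcongr
  calc |∫ x in a..b, (chord f a b x - f x)|
      ≤ ∫ x in a..b, |chord f a b x - f x| := intervalIntegral.abs_integral_le_integral_abs hab.le
    _ ≤ ∫ x in a..b, (chord g a b x - g x) :=
      intervalIntegral.integral_mono_on hab.le
        (((continuous_chord f a b).intervalIntegrable a b).sub hfi).abs
        (((continuous_chord g a b).intervalIntegrable a b).sub hgi)
        fun x hx => abs_chord_sub_le_chord_sub hab hx hdom

theorem stmt12 (a b : ℝ) (hab : a < b) (f g : ℝ → ℝ)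
    (hgconv : ConvexOn ℝ (Set.Icc a b) g)
    (hgint : IntegrableOn g (Set.Icc a b))
    (hfint : IntegrableOn f (Set.Icc a b))
    (hfdom : ∀ x ∈ Set.Icc a b, ∀ y ∈ Set.Icc a b, ∀ l ∈ Set.Icc (0:ℝ) 1,
      |l * f x + (1 - l) * f y - f (l * x + (1 - l) * y)| ≤
        l * g x + (1 - l) * g y - g (l * x + (1 - l) * y)) :
    |(f a + f b) / 2 - (1 / (b - a)) * ∫ x in a..b, f x| ≤
      (g a + g b) / 2 - (1 / (b - a)) * ∫ x in a..b, g x :=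
  stmt12_general a b hab f g hgint hfint hfdom
end

section
/- Let a < b, let s ∈ (0,1), let g : [a,b] → [0,∞) be an s-convex (in the second sense) Lebesgue integrable function, and let f : [a,b] → [0,∞) be a Lebesgue integrable (g,s)-convex dominated function. Then |(1/(b−a)) ∫_a^b f(x) dx − 2^{s−1} f((a+b)/2)| ≤ (1/(b−a)) ∫_a^b g(x) dx − 2^{s−1} g((a+b)/2). -/
open MeasureTheory Set

theorem stmt13 (a b : ℝ) (hab : a < b) (s : ℝ) (hs : s ∈ Set.Ioo (0:ℝ) 1)
    (f g : ℝ → ℝ)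
    (hg0 : ∀ x ∈ Set.Icc a b, 0 ≤ g x)
    (hgconv : ∀ x ∈ Set.Icc a b, ∀ y ∈ Set.Icc a b, ∀ t ∈ Set.Ioo (0:ℝ) 1,
      g (t * x + (1 - t) * y) ≤ t ^ s * g x + (1 - t) ^ s * g y)
    (hgint : IntegrableOn g (Set.Icc a b))
    (hf0 : ∀ x ∈ Set.Icc a b, 0 ≤ f x)
    (hfint : IntegrableOn f (Set.Icc a b))
    (hfdom : ∀ x ∈ Set.Icc a b, ∀ y ∈ Set.Icc a b, ∀ t ∈ Set.Ioo (0:ℝ) 1,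
      |t ^ s * f x + (1 - t) ^ s * f y - f (t * x + (1 - t) * y)| ≤
        t ^ s * g x + (1 - t) ^ s * g y - g (t * x + (1 - t) * y)) :
    |(1 / (b - a)) * ∫ x in a..b, f x - (2:ℝ) ^ (s - 1) * f ((a + b) / 2)| ≤
      (1 / (b - a)) * ∫ x in a..b, g x - (2:ℝ) ^ (s - 1) * g ((a + b) / 2) := by
  have hab' : (0:ℝ) < b - a := by linarith
  set m : ℝ := (a + b) / 2 with hm
  set A : ℝ := (1/2 : ℝ) ^ s with hA
  have hApos : 0 < A := Real.rpow_pos_of_pos (by norm_num) s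
  have hhalf : (1/2 : ℝ) ∈ Set.Ioo (0:ℝ) 1 := by norm_num
  have key : ∀ u ∈ Set.Icc a b,
      |A * f u + A * f (a + b - u) - f m| ≤
      A * g u + A * g (a + b - u) - g m := by
    intro u hu
    have hu' : a + b - u ∈ Set.Icc a b := ⟨by linarith [hu.2], by linarith [hu.1]⟩
    have h := hfdom u hu (a + b - u) hu' (1/2) hhalf
    have heq : (1/2:ℝ) * u + (1 - 1/2) * (a + b - u) = m := by rw [hm]; ring
    have h2 : (1 - (1/2:ℝ)) = 1/2 := by norm_num
    rw [heq, h2] at h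
    exact h
  have hfI : IntervalIntegrable f volume a b :=
    (intervalIntegrable_iff_integrableOn_Icc_of_le hab.le).2 hfint
  have hgI : IntervalIntegrable g volume a b :=
    (intervalIntegrable_iff_integrableOn_Icc_of_le hab.le).2 hgint
  have hfI' : IntervalIntegrable (fun u => f (a + b - u)) volume a b := by
    have := hfI.comp_sub_left (a + b)
    simpa using this.symm
  have hgI' : IntervalIntegrable (fun u => g (a + b - u)) volume a b := by
    have := hgI.comp_sub_left (a + b)
    simpa using this.symm
  have hFint : IntervalIntegrable (fun u => A * f u + A * f (a + b - u) - f m) volume a b :=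
    ((hfI.const_mul A).add (hfI'.const_mul A)).sub intervalIntegrable_const
  have hGint : IntervalIntegrable (fun u => A * g u + A * g (a + b - u) - g m) volume a b :=
    ((hgI.const_mul A).add (hgI'.const_mul A)).sub intervalIntegrable_const
  have step1 : |∫ u in a..b, (A * f u + A * f (a + b - u) - f m)| ≤
      ∫ u in a..b, (A * g u + A * g (a + b - u) - g m) := by
    calc |∫ u in a..b, (A * f u + A * f (a + b - u) - f m)|
        ≤ ∫ u in a..b, |A * f u + A * f (a + b - u) - f m| :=
          intervalIntegral.abs_integral_le_integral_abs hab.le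
      _ ≤ ∫ u in a..b, (A * g u + A * g (a + b - u) - g m) :=
          intervalIntegral.integral_mono_on hab.le hFint.abs hGint key
  have hrefl_f : (∫ u in a..b, f (a + b - u)) = ∫ u in a..b, f u := by
    rw [intervalIntegral.integral_comp_sub_left f (a + b)]
    norm_num
  have hrefl_g : (∫ u in a..b, g (a + b - u)) = ∫ u in a..b, g u := by
    rw [intervalIntegral.integral_comp_sub_left g (a + b)]
    norm_num
  have hIF : (∫ u in a..b, (A * f u + A * f (a + b - u) - f m))
      = 2 * A * (∫ u in a..b, f u) - (b - a) * f m := by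
    rw [intervalIntegral.integral_sub ((hfI.const_mul A).add (hfI'.const_mul A))
        intervalIntegrable_const,
      intervalIntegral.integral_add (hfI.const_mul A) (hfI'.const_mul A),
      intervalIntegral.integral_const_mul, intervalIntegral.integral_const_mul,
      hrefl_f, intervalIntegral.integral_const, smul_eq_mul]
    ring
  have hIG : (∫ u in a..b, (A * g u + A * g (a + b - u) - g m))
      = 2 * A * (∫ u in a..b, g u) - (b - a) * g m := by
    rw [intervalIntegral.integral_sub ((hgI.const_mul A).add (hgI'.const_mul A))
        intervalIntegrable_const,
      intervalIntegral.integral_add (hgI.const_mul A) (hgI'.const_mul A),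
      intervalIntegral.integral_const_mul, intervalIntegral.integral_const_mul,
      hrefl_g, intervalIntegral.integral_const, smul_eq_mul]
    ring
  rw [hIF, hIG] at step1
  -- key arithmetic fact : 2 * A * 2^(s-1) = 1
  have h2s : (0:ℝ) < (2:ℝ) ^ s := Real.rpow_pos_of_pos (by norm_num) s
  have hkey2 : 2 * A * (2:ℝ) ^ (s - 1) = 1 := by
    have hA' : A = ((2:ℝ) ^ s)⁻¹ := by
      rw [hA, show (1/2:ℝ) = 2⁻¹ by norm_num, ← Real.rpow_neg_one (2:ℝ),
        ← Real.rpow_mul (by norm_num : (0:ℝ) ≤ 2), ← Real.rpow_neg (by norm_num : (0:ℝ) ≤ 2)]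
      ring_nf
    have hsub : (2:ℝ) ^ (s - 1) = (2:ℝ) ^ s / 2 := by
      rw [Real.rpow_sub (by norm_num : (0:ℝ) < 2), Real.rpow_one]
    rw [hA', hsub]
    field_simp
  set k : ℝ := (2:ℝ) ^ (s - 1) / (b - a) with hk
  have hkpos : 0 < k := div_pos (Real.rpow_pos_of_pos (by norm_num) _) hab'
  have hsplit_f : (∫ x in a..b, f x - (2:ℝ) ^ (s - 1) * f m)
      = (∫ x in a..b, f x) - (b - a) * ((2:ℝ) ^ (s - 1) * f m) := by
    rw [intervalIntegral.integral_sub hfI intervalIntegrable_const,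
      intervalIntegral.integral_const, smul_eq_mul]
  have hsplit_g : (∫ x in a..b, g x - (2:ℝ) ^ (s - 1) * g m)
      = (∫ x in a..b, g x) - (b - a) * ((2:ℝ) ^ (s - 1) * g m) := by
    rw [intervalIntegral.integral_sub hgI intervalIntegrable_const,
      intervalIntegral.integral_const, smul_eq_mul]
  have hL : (1 / (b - a)) * ((∫ x in a..b, f x) - (b - a) * ((2:ℝ) ^ (s - 1) * f m))
      = (2 * A * (∫ u in a..b, f u) - (b - a) * f m) * k := by
    rw [hk]
    have hba : (b - a) ≠ 0 := ne_of_gt hab'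
    field_simp
    linear_combination (-(∫ u in a..b, f u)) * hkey2
  have hR : (1 / (b - a)) * ((∫ x in a..b, g x) - (b - a) * ((2:ℝ) ^ (s - 1) * g m))
      = (2 * A * (∫ u in a..b, g u) - (b - a) * g m) * k := by
    rw [hk]
    have hba : (b - a) ≠ 0 := ne_of_gt hab'
    field_simp
    linear_combination (-(∫ u in a..b, g u)) * hkey2
  rw [hsplit_f, hsplit_g, hL, hR, abs_mul, abs_of_pos hkpos]
  exact mul_le_mul_of_nonneg_right step1 hkpos.le
end

section
/- Let a < b, let g : [a,b] → [0,∞) be a P-function that is Lebesgue integrable, and let f : [a,b] → [0,∞) be a Lebesgue integrable (g,P(I))-convex dominated function. Then |f(a) + f(b) − (1/(b−a)) ∫_a^b f(x) dx| ≤ g(a) + g(b) − (1/(b−a)) ∫_a^b g(x) dx. -/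
/-!
Every point `x` of `[a, b]` is a convex combination of `a` and `b` (the endpoints themselves
are covered by taking `y = x` in the domination), so `|f a + f b - f x| ≤ g a + g b - g x`
pointwise on `[a, b]`. Integrating over `[a, b]` and dividing by `b - a` gives the inequality.
-/

open MeasureTheory Set

def IsConvexDominatedOn (s : Set ℝ) (g f : ℝ → ℝ) : Prop :=
  ∀ x ∈ s, ∀ y ∈ s, ∀ t ∈ Ioo (0 : ℝ) 1,
    |f x + f y - f (t * x + (1 - t) * y)| ≤ g x + g y - g (t * x + (1 - t) * y)

namespace IsConvexDominatedOn

variable {s : Set ℝ} {f g : ℝ → ℝ}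

theorem abs_le (h : IsConvexDominatedOn s g f) {x : ℝ} (hx : x ∈ s) : |f x| ≤ g x := by
  -- the domination inequality with `y = x`
  have := h x hx x hx (1 / 2) ⟨by norm_num, by norm_num⟩
  rwa [show 1 / 2 * x + (1 - 1 / 2) * x = x by ring, add_sub_cancel_right,
    add_sub_cancel_right] at this

theorem abs_endpoints_sub_le {a b : ℝ} (h : IsConvexDominatedOn (Icc a b) g f) {x : ℝ}
    (hx : x ∈ Icc a b) : |f a + f b - f x| ≤ g a + g b - g x := by
  have ha : a ∈ Icc a b := ⟨le_rfl, hx.1.trans hx.2⟩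
  have hb : b ∈ Icc a b := ⟨hx.1.trans hx.2, le_rfl⟩
  rcases hx.1.eq_or_lt with rfl | hax
  · simpa only [add_sub_cancel_left] using h.abs_le hb
  rcases hx.2.eq_or_lt with rfl | hxb
  · simpa only [add_sub_cancel_right] using h.abs_le ha
  -- `x` is the convex combination of `a` and `b` with weight `t = (b - x) / (b - a)` on `a`.
  have hba : 0 < b - a := by linarith
  have ht : (b - x) / (b - a) ∈ Ioo (0 : ℝ) 1 :=
    ⟨div_pos (by linarith) hba, (div_lt_one hba).2 (by linarith)⟩
  have hcomb : (b - x) / (b - a) * a + (1 - (b - x) / (b - a)) * b = x := by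
    field_simp
    ring
  simpa only [hcomb] using h a ha b hb _ ht

end IsConvexDominatedOn

theorem intervalIntegral_const_sub {a b c : ℝ} {f : ℝ → ℝ}
    (hf : IntervalIntegrable f volume a b) :
    ∫ x in a..b, (c - f x) = (b - a) * c - ∫ x in a..b, f x := by
  rw [intervalIntegral.integral_sub intervalIntegrable_const hf,
    intervalIntegral.integral_const, smul_eq_mul]

theorem stmt17_general (a b : ℝ) (hab : a < b) (f g : ℝ → ℝ)
    (hgint : IntegrableOn g (Set.Icc a b))
    (hfint : IntegrableOn f (Set.Icc a b))
    (hfdom : ∀ x ∈ Set.Icc a b, ∀ y ∈ Set.Icc a b, ∀ t ∈ Set.Ioo (0:ℝ) 1,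
      |f x + f y - f (t * x + (1 - t) * y)| ≤
        g x + g y - g (t * x + (1 - t) * y)) :
    |(f a + f b) - (1 / (b - a)) * ∫ x in a..b, f x| ≤
      (g a + g b) - (1 / (b - a)) * ∫ x in a..b, g x := by
  have hfI : IntervalIntegrable f volume a b :=
    (intervalIntegrable_iff_integrableOn_Icc_of_le hab.le).2 hfint
  have hgI : IntervalIntegrable g volume a b :=
    (intervalIntegrable_iff_integrableOn_Icc_of_le hab.le).2 hgint
  have hint : |∫ x in a..b, (f a + f b - f x)| ≤ ∫ x in a..b, (g a + g b - g x) :=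
    intervalIntegral.norm_integral_le_of_norm_le (f := fun x => f a + f b - f x) hab.le
      (ae_of_all _ fun x hx =>
        IsConvexDominatedOn.abs_endpoints_sub_le hfdom (Ioc_subset_Icc_self hx))
      (intervalIntegrable_const.sub hgI)
  rw [intervalIntegral_const_sub hfI, intervalIntegral_const_sub hgI] at hint
  have hba : 0 < b - a := sub_pos.2 hab
  have hscale : ∀ c I : ℝ, c - 1 / (b - a) * I = 1 / (b - a) * ((b - a) * c - I) := by
    intro c I
    field_simp
  rw [hscale, hscale, abs_mul, abs_of_pos (one_div_pos.2 hba)]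
  exact mul_le_mul_of_nonneg_left hint (one_div_pos.2 hba).le

theorem stmt17 (a b : ℝ) (hab : a < b) (f g : ℝ → ℝ)
    (hg0 : ∀ x ∈ Set.Icc a b, 0 ≤ g x)
    (hgconv : ∀ x ∈ Set.Icc a b, ∀ y ∈ Set.Icc a b, ∀ t ∈ Set.Ioo (0:ℝ) 1,
      g (t * x + (1 - t) * y) ≤ g x + g y)
    (hgint : IntegrableOn g (Set.Icc a b))
    (hf0 : ∀ x ∈ Set.Icc a b, 0 ≤ f x)
    (hfint : IntegrableOn f (Set.Icc a b))
    (hfdom : ∀ x ∈ Set.Icc a b, ∀ y ∈ Set.Icc a b, ∀ t ∈ Set.Ioo (0:ℝ) 1,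
      |f x + f y - f (t * x + (1 - t) * y)| ≤
        g x + g y - g (t * x + (1 - t) * y)) :
    |(f a + f b) - (1 / (b - a)) * ∫ x in a..b, f x| ≤
      (g a + g b) - (1 / (b - a)) * ∫ x in a..b, g x :=
  stmt17_general a b hab f g hgint hfint hfdom
end
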